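/- Let n ≥ 5 be odd and set c := cos(π/n)/(1 + cos(π/n)). Suppose v_0, v_1, …, v_n are vectors in a real inner product space such that ⟨v_0, v_0⟩ = 1, ⟨v_i, v_i⟩ = ⟨v_0, v_i⟩ = c for all i ∈ {1,…,n}, and ⟨v_i, v_j⟩ = 0 whenever i − j ≡ ±1 (mod n). Define the (1+n)×(1+n) matrix Z by Z = (1/c)·Gram(−v_0, v_1, …, v_n), i.e. Z_{00} = 1/c, Z_{0i} = Z_{i0} = −(1/c)⟨v_0, v_i⟩, and Z_{ij} = (1/c)⟨v_i, v_j⟩ for i, j ∈ {1,…,n}. Then Z is positive semidefinite, Z_{00} = (1 + cos(π/n))/cos(π/n), Z_{ii} = 1 = −(2 Z_{0i} + 1) for all i ∈ {1,…,n}, and Z_{ij} = 0 for all distinct i, j ∈ {1,…,n} with i − j ≡ ±1 (mod n); hence Z is dual feasible for the Lovász theta SDP of C̄_n with objective value (1 + cos(π/n))/cos(π/n). -/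

import Mathlib

open scoped RealInnerProductSpace

/-! `Z` is `1/c` times the Gram matrix of `-v₀, v₁, …, vₙ`, so it is positive semidefinite as
soon as `c > 0`, which holds because `π/n < π/2`. -/

lemma Real.cos_pi_div_pos_of_two_lt {x : ℝ} (hx : 2 < x) : 0 < Real.cos (Real.pi / x) := by
  have hx0 : 0 < x := by linarith
  apply Real.cos_pos_of_mem_Ioo
  constructor
  · linarith [show 0 < Real.pi / x by positivity, Real.pi_pos]
  · exact div_lt_div_of_pos_left Real.pi_pos two_pos hx

theorem antiHole_dual_feasible {E : Type*} [NormedAddCommGroup E] [InnerProductSpace ℝ E]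
    (n : ℕ) (hn : 5 ≤ n)
    (c : ℝ) (hc : c = Real.cos (Real.pi / n) / (1 + Real.cos (Real.pi / n)))
    (v : Fin (n + 1) → E)
    (hv0 : ⟪v 0, v 0⟫ = 1)
    (hvii : ∀ i : Fin (n + 1), i.val ≠ 0 → ⟪v i, v i⟫ = c)
    (hv0i : ∀ i : Fin (n + 1), i.val ≠ 0 → ⟪v 0, v i⟫ = c)
    (horth : ∀ i j : Fin (n + 1), i.val ≠ 0 → j.val ≠ 0 →
      (i.val % n + 1 = j.val ∨ j.val % n + 1 = i.val) → ⟪v i, v j⟫ = 0)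
    (Z : Matrix (Fin (n + 1)) (Fin (n + 1)) ℝ)
    (hZ : ∀ i j : Fin (n + 1), Z i j =
      (1 / c) * ⟪if i.val = 0 then -v 0 else v i, if j.val = 0 then -v 0 else v j⟫) :
    Z.PosSemidef ∧
    Z 0 0 = (1 + Real.cos (Real.pi / n)) / Real.cos (Real.pi / n) ∧
    (∀ i : Fin (n + 1), i.val ≠ 0 → Z i i = 1 ∧ Z i i = -(2 * Z 0 i + 1)) ∧
    (∀ i j : Fin (n + 1), i.val ≠ 0 → j.val ≠ 0 → i ≠ j →
      (i.val % n + 1 = j.val ∨ j.val % n + 1 = i.val) → Z i j = 0) := by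
  have hcos : 0 < Real.cos (Real.pi / n) :=
    Real.cos_pi_div_pos_of_two_lt (by exact_mod_cast (by omega : 2 < n))
  have hc0 : 0 < c := hc ▸ by positivity
  have hZ_gram : Z = (1 / c) • Matrix.gram ℝ fun i : Fin (n + 1) ↦
      if i.val = 0 then -v 0 else v i := by
    ext i j
    simp [hZ]
  have hZii (i : Fin (n + 1)) (hi : i.val ≠ 0) : Z i i = 1 := by
    rw [hZ, if_neg hi, hvii i hi, one_div_mul_cancel hc0.ne']
  refine ⟨?_, ?_, fun i hi ↦ ⟨hZii i hi, ?_⟩, fun i j hi hj _ hij ↦ ?_⟩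
  · exact hZ_gram ▸ (Matrix.posSemidef_gram ℝ _).smul (by positivity)
  · rw [hZ, Fin.val_zero, if_pos rfl, inner_neg_neg, hv0, hc, mul_one, one_div, inv_div]
  · rw [hZii i hi, hZ, Fin.val_zero, if_pos rfl, if_neg hi, inner_neg_left, hv0i i hi,
      mul_neg, one_div_mul_cancel hc0.ne']
    norm_num
  · rw [hZ, if_neg hi, if_neg hj, horth i j hi hj hij, mul_zero]
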